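/- Let m ≥ 2 and n ≥ 2 be integers, and set γ_k = F_{m,k+1}/F_{m,k}. Then for every i ∈ {1, …, n−1} and every k ∈ {1, …, n−2}, the i-th entry of the vector Q[m,n]^k·e satisfies (Q[m,n]^k e)_i = (m−1)^k·F_{m,k}^{n−2}·γ_k^{i−1}, where e is the all-ones vector. -/

import Mathlib

attribute [local instance] Classical.propDecidable

open Matrix

/-- Generalized Fibonacci sequence: `F_{α,0} = 1`, `F_{α,1} = 1`,
`F_{α,k} = F_{α,k-1} + (α-1)·F_{α,k-2}`. -/
noncomputable def genFib (α : ℝ) : ℕ → ℝ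
  | 0 => 1
  | 1 => 1
  | k + 2 => genFib α (k + 1) + (α - 1) * genFib α k

/-- Walk matrix of an `r × r` real matrix `B`: columns `e, B e, B² e, …, B^{r-1} e`. -/
noncomputable def walkMatrix {r : ℕ} (B : Matrix (Fin r) (Fin r) ℝ) :
    Matrix (Fin r) (Fin r) ℝ :=
  fun i k => ((B ^ (k : ℕ)) *ᵥ (fun _ => (1 : ℝ))) i

/-- The Pascal-type quotient matrix `P[m,n]`, indexed by `1, …, n-1` (here `i ↦ i.val + 1`):
`(i,j)`-entry is `C(i, n-j)·(m-1)^{n-j}` if `i + j ≥ n`, else `0`. -/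
noncomputable def Pmat (m n : ℕ) : Matrix (Fin (n - 1)) (Fin (n - 1)) ℝ :=
  fun i j =>
    if n ≤ (i.val + 1) + (j.val + 1) then
      (Nat.choose (i.val + 1) (n - (j.val + 1)) : ℝ) * ((m : ℝ) - 1) ^ (n - (j.val + 1))
    else 0

/-- The Pascal-type quotient matrix `Q[m,n]`, indexed by `1, …, n-1` (here `i ↦ i.val + 1`):
`(i,j)`-entry is `C(i-1, n-j-1)·(m-1)^{n-j}` if `i + j ≥ n`, else `0`. -/
noncomputable def Qmat (m n : ℕ) : Matrix (Fin (n - 1)) (Fin (n - 1)) ℝ :=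
  fun i j =>
    if n ≤ (i.val + 1) + (j.val + 1) then
      (Nat.choose i.val (n - (j.val + 1) - 1) : ℝ) * ((m : ℝ) - 1) ^ (n - (j.val + 1))
    else 0

/-- Vertices of the zero-divisor graph of `F^n`: nonzero zero-divisors. -/
abbrev zdVertex (F : Type) [Field F] [Fintype F] (n : ℕ) : Type :=
  {x : Fin n → F // x ≠ 0 ∧ ∃ y : Fin n → F, y ≠ 0 ∧ x * y = 0}

/-- The zero-divisor graph `Γ(R_n)` of `R_n = F × ⋯ × F` (`n` factors). -/
def zdGraph (F : Type) [Field F] [Fintype F] (n : ℕ) : SimpleGraph (zdVertex F n) where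
  Adj a b := a ≠ b ∧ (a : Fin n → F) * (b : Fin n → F) = 0
  symm := ⟨fun a b ⟨hne, h⟩ => ⟨hne.symm, by rwa [mul_comm]⟩⟩
  loopless := ⟨fun a ⟨hne, _⟩ => hne rfl⟩

/-- The set of main eigenvalues of a finite simple graph: real numbers `μ` admitting an
eigenvector of the adjacency matrix with eigenvalue `μ` and nonzero coordinate sum. -/
noncomputable def mainEigs {V : Type} [Fintype V] (G : SimpleGraph V) : Set ℝ :=
  {μ : ℝ | ∃ v : V → ℝ, v ≠ 0 ∧ (G.adjMatrix ℝ) *ᵥ v = μ • v ∧ ∑ i, v i ≠ 0}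

/-- `X_{*0}`: vertices whose `(n-1)`-st coordinate is nonzero and `n`-th coordinate is zero. -/
def Xstar0 (F : Type) [Field F] [Fintype F] (n : ℕ) (hn : 2 ≤ n) : Set (zdVertex F n) :=
  {x | (x : Fin n → F) ⟨n - 2, by omega⟩ ≠ 0 ∧ (x : Fin n → F) ⟨n - 1, by omega⟩ = 0}

/-- `X_{0*}`: vertices whose `(n-1)`-st coordinate is zero and `n`-th coordinate is nonzero. -/
def X0star (F : Type) [Field F] [Fintype F] (n : ℕ) (hn : 2 ≤ n) : Set (zdVertex F n) :=
  {x | (x : Fin n → F) ⟨n - 2, by omega⟩ = 0 ∧ (x : Fin n → F) ⟨n - 1, by omega⟩ ≠ 0}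

def subVerts (F : Type) [Field F] [Fintype F] (n : ℕ) (hn : 2 ≤ n) : Set (zdVertex F n) :=
  Xstar0 F n hn ∪ X0star F n hn

/-- The bipartite subgraph `Γ'(R_n)` of `Γ(R_n)` induced by `X_{*0} ∪ X_{0*}`. -/
def zdSubGraph (F : Type) [Field F] [Fintype F] (n : ℕ) (hn : 2 ≤ n) :
    SimpleGraph ↥(subVerts F n hn) :=
  SimpleGraph.induce (subVerts F n hn) (zdGraph F n)

/-- The coefficient sequence `h`: `h 0 = 1`,
`h j = F_{m,j+1}^n − Σ_{r=0}^{j−1} h r · F_{m,j−r}^n` for `j ≥ 1`. -/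
noncomputable def hseq (m n : ℕ) : ℕ → ℝ
  | 0 => 1
  | j + 1 => (genFib m (j + 2)) ^ n -
      ∑ r ∈ (Finset.range (j + 1)).attach, hseq m n r.1 * (genFib m (j + 1 - r.1)) ^ n
  decreasing_by exact Finset.mem_range.mp r.2

lemma genFib_pos (m : ℕ) (hm : 2 ≤ m) : ∀ k, 0 < genFib (m : ℝ) k := by
  have hm1 : (1 : ℝ) ≤ (m : ℝ) - 1 := by
    have : (2 : ℝ) ≤ (m : ℝ) := by exact_mod_cast hm
    linarith
  intro k
  induction k using Nat.strong_induction_on with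
  | _ k ih =>
    match k with
    | 0 => norm_num [genFib]
    | 1 => norm_num [genFib]
    | k + 2 =>
      have h1 := ih (k + 1) (by omega)
      have h2 := ih k (by omega)
      have : genFib (m : ℝ) (k + 2) = genFib m (k + 1) + ((m : ℝ) - 1) * genFib m k := rfl
      rw [this]
      nlinarith

lemma qsum (m n : ℕ) (i : Fin (n - 1)) (c : ℕ → ℝ) :
    ∑ j : Fin (n - 1), Qmat m n i j * c j.val
      = ∑ t ∈ Finset.range (n - 1),
          (Nat.choose i.val t : ℝ) * ((m : ℝ) - 1) ^ (t + 1) * c (n - 2 - t) := by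
  have h1 : ∑ j : Fin (n - 1), Qmat m n i j * c j.val
      = ∑ j ∈ Finset.range (n - 1),
          (if n ≤ (i.val + 1) + (j + 1) then
            (Nat.choose i.val (n - (j + 1) - 1) : ℝ) * ((m : ℝ) - 1) ^ (n - (j + 1))
          else 0) * c j :=
    Fin.sum_univ_eq_sum_range
      (fun j => (if n ≤ (i.val + 1) + (j + 1) then
            (Nat.choose i.val (n - (j + 1) - 1) : ℝ) * ((m : ℝ) - 1) ^ (n - (j + 1))
          else 0) * c j) (n - 1)
  rw [h1, ← Finset.sum_range_reflect]
  refine Finset.sum_congr rfl (fun t ht => ?_)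
  simp only [Finset.mem_range] at ht
  have ht' : t ≤ n - 2 := by omega
  have e0 : n - 1 - 1 - t = n - 2 - t := by omega
  rw [e0]
  by_cases hti : t ≤ i.val
  · have e1 : n - (n - 2 - t + 1) - 1 = t := by omega
    have e2 : n - (n - 2 - t + 1) = t + 1 := by omega
    rw [if_pos (by omega), e1, e2]
  · rw [if_neg (by omega), Nat.choose_eq_zero_of_lt (by omega)]
    simp

lemma key (m n : ℕ) (hm : 2 ≤ m) (hn : 2 ≤ n) :
    ∀ k (i : Fin (n - 1)), ((Qmat m n ^ k) *ᵥ fun _ => (1 : ℝ)) i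
      = ((m : ℝ) - 1) ^ k * genFib m k ^ (n - 2 - i.val) * genFib m (k + 1) ^ i.val := by
  intro k
  induction k with
  | zero =>
    intro i
    simp [genFib, Matrix.one_mulVec]
  | succ k ih =>
    intro i
    have hiv : i.val ≤ n - 2 := by have := i.isLt; omega
    have hc : ((Qmat m n ^ k) *ᵥ fun _ => (1 : ℝ))
        = fun j : Fin (n - 1) =>
            (fun t : ℕ => ((m : ℝ) - 1) ^ k * genFib m k ^ (n - 2 - t) * genFib m (k + 1) ^ t)
              j.val :=
      funext ih
    rw [pow_succ', ← Matrix.mulVec_mulVec, hc]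
    show ∑ j : Fin (n - 1), Qmat m n i j *
        (fun t : ℕ => ((m : ℝ) - 1) ^ k * genFib m k ^ (n - 2 - t) * genFib m (k + 1) ^ t) j.val
      = _
    rw [qsum m n i
      (fun t : ℕ => ((m : ℝ) - 1) ^ k * genFib m k ^ (n - 2 - t) * genFib m (k + 1) ^ t)]
    have hF2 : genFib (m : ℝ) (k + 1 + 1)
        = ((m : ℝ) - 1) * genFib m k + genFib m (k + 1) := by
      have : genFib (m : ℝ) (k + 2) = genFib m (k + 1) + ((m : ℝ) - 1) * genFib m k := rfl
      rw [this]; ring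
    rw [hF2, add_pow, Finset.mul_sum]
    rw [← Finset.sum_subset (Finset.range_subset_range.2 (by omega : i.val + 1 ≤ n - 1))
      (fun t _ hts => by
        rw [Finset.mem_range, not_lt] at hts
        rw [Nat.choose_eq_zero_of_lt (by omega)]
        simp)]
    refine Finset.sum_congr rfl (fun t ht => ?_)
    simp only [Finset.mem_range] at ht
    by_cases hti : t ≤ i.val
    · have e3 : n - 2 - (n - 2 - t) = t := by omega
      have e4 : n - 2 - t = (i.val - t) + (n - 2 - i.val) := by omega
      rw [e3, e4, pow_add, mul_pow]
      ring
    · rw [Nat.choose_eq_zero_of_lt (by omega)]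
      simp

/-- Entries of the walk matrix of `Q[m,n]`: for `1 ≤ k ≤ n−2` and `i ∈ {1,…,n−1}`,
`(Q[m,n]^k e)_i = (m−1)^k F_{m,k}^{n−2} γ_k^{i−1}`, where `γ_k = F_{m,k+1}/F_{m,k}`. -/
theorem Qmat_pow_mulVec_one (m n : ℕ) (hm : 2 ≤ m) (hn : 2 ≤ n) (i : Fin (n - 1))
    (k : ℕ) (hk1 : 1 ≤ k) (hk2 : k ≤ n - 2) :
    ((Qmat m n ^ k) *ᵥ fun _ => (1 : ℝ)) i
      = ((m : ℝ) - 1) ^ k * (genFib m k) ^ (n - 2) *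
          (genFib m (k + 1) / genFib m k) ^ i.val := by
  have h := key m n hm hn k i
  rw [h]
  have hiv : i.val ≤ n - 2 := by have := i.isLt; omega
  have hpos : 0 < genFib (m : ℝ) k := genFib_pos m hm k
  have hne : genFib (m : ℝ) k ≠ 0 := ne_of_gt hpos
  rw [div_pow]
  have e : genFib (m : ℝ) k ^ (n - 2) = genFib m k ^ (n - 2 - i.val) * genFib m k ^ i.val := by
    rw [← pow_add]; congr 1; omega
  rw [e]
  field_simp
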